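/- Let A ∈ ℝ^{d1×d2×d3} be a tensor whose Tucker ranks are all at most r, i.e., rank(ℳ_k(A)) ≤ r for k = 1, 2, 3, where ℳ_k is the mode-k matricization. Then ‖A‖_*² ≤ r² ‖A‖_F², i.e., the tensor nuclear norm satisfies ‖A‖_* ≤ r ‖A‖_F. Consequently, sup_{B ≠ 0, B Tucker ranks ≤ r} ‖B‖_*²/‖B‖_F² ≤ r². -/

import Mathlib

/-! Let `p_a` (`a < r₁`) and `q_b` (`b < r₂`) be orthonormal bases of the spans of the mode-1 and
mode-2 fibers of `A`. Then `A = ∑_{a,b} p_a ⊗ q_b ⊗ g_{ab}` with `g_{ab} = A ×₁ p_a ×₂ q_b`, so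
`‖A‖_F² = ∑ ‖g_{ab}‖²`. If `‖B‖_s ≤ 1`, each vector `B ×₁ p_a ×₂ q_b` has Euclidean norm at most
`‖B‖_s ≤ 1`, and Cauchy–Schwarz, applied twice, gives
`⟨A, B⟩ = ∑ ⟨g_{ab}, B ×₁ p_a ×₂ q_b⟩ ≤ ∑ ‖g_{ab}‖ ≤ √(r₁ r₂) ‖A‖_F ≤ r ‖A‖_F`. -/

noncomputable section

/-- Inner product of two order-3 tensors. -/
def tip {d1 d2 d3 : ℕ} (A B : Fin d1 → Fin d2 → Fin d3 → ℝ) : ℝ :=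
  ∑ j1, ∑ j2, ∑ j3, A j1 j2 j3 * B j1 j2 j3

/-- Tensor spectral norm. -/
def specNorm {d1 d2 d3 : ℕ} (A : Fin d1 → Fin d2 → Fin d3 → ℝ) : ℝ :=
  sSup {x | ∃ (u : Fin d1 → ℝ) (v : Fin d2 → ℝ) (w : Fin d3 → ℝ),
    (∑ i, u i ^ 2) ≤ 1 ∧ (∑ i, v i ^ 2) ≤ 1 ∧ (∑ i, w i ^ 2) ≤ 1 ∧
    x = tip A (fun j1 j2 j3 => u j1 * v j2 * w j3)}

/-- Tensor nuclear norm, the dual norm of the spectral norm. -/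
def nucNorm {d1 d2 d3 : ℕ} (A : Fin d1 → Fin d2 → Fin d3 → ℝ) : ℝ :=
  sSup {x | ∃ B : Fin d1 → Fin d2 → Fin d3 → ℝ, specNorm B ≤ 1 ∧ x = tip A B}

/-- Mode-1,2,3 matricizations of an order-3 tensor. -/
def matr1 {d1 d2 d3 : ℕ} (A : Fin d1 → Fin d2 → Fin d3 → ℝ) :
    Matrix (Fin d1) (Fin d2 × Fin d3) ℝ := Matrix.of fun j1 q => A j1 q.1 q.2

def matr2 {d1 d2 d3 : ℕ} (A : Fin d1 → Fin d2 → Fin d3 → ℝ) :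
    Matrix (Fin d2) (Fin d1 × Fin d3) ℝ := Matrix.of fun j2 q => A q.1 j2 q.2

def matr3 {d1 d2 d3 : ℕ} (A : Fin d1 → Fin d2 → Fin d3 → ℝ) :
    Matrix (Fin d3) (Fin d1 × Fin d2) ℝ := Matrix.of fun j3 q => A q.1 q.2 j3

open Finset Matrix Module

theorem Submodule.exists_orthonormal_expansion {ι : Type*} [Fintype ι]
    (V : Submodule ℝ (ι → ℝ)) :
    ∃ (m : ℕ) (p : Fin m → ι → ℝ), m = finrank ℝ V ∧ (∀ a, p a ⬝ᵥ p a = 1) ∧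
      ∀ f ∈ V, f = ∑ a, (p a ⬝ᵥ f) • p a := by
  let e := WithLp.linearEquiv 2 ℝ (ι → ℝ)
  let W := V.map e.symm.toLinearMap
  let b := stdOrthonormalBasis ℝ W
  refine ⟨finrank ℝ W, fun a => e (b a), LinearEquiv.finrank_map_eq _ _, fun a => ?_,
    fun f hf => ?_⟩
  · have h := b.inner_eq_one a
    rwa [Submodule.coe_inner, EuclideanSpace.inner_eq_star_dotProduct] at h
  · have := congrArg (fun y : W => e y) (b.sum_repr' ⟨e.symm f, Submodule.mem_map_of_mem hf⟩)
    simpa [e, Submodule.coe_inner, EuclideanSpace.inner_eq_star_dotProduct, dotProduct_comm]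
      using this.symm

section
variable {d1 d2 d3 : ℕ}

def contract12 (A : Fin d1 → Fin d2 → Fin d3 → ℝ) (u : Fin d1 → ℝ) (v : Fin d2 → ℝ) :
    Fin d3 → ℝ :=
  fun j3 => ∑ j1, ∑ j2, u j1 * v j2 * A j1 j2 j3

theorem contract12_apply (A : Fin d1 → Fin d2 → Fin d3 → ℝ) (u : Fin d1 → ℝ) (v : Fin d2 → ℝ)
    (j3 : Fin d3) : contract12 A u v j3 = v ⬝ᵥ fun j2 => u ⬝ᵥ fun j1 => A j1 j2 j3 := by
  simp only [contract12, dotProduct, Finset.mul_sum]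
  rw [Finset.sum_comm]
  exact sum_congr rfl fun _ _ => sum_congr rfl fun _ _ => by ring

theorem tip_comm (A B : Fin d1 → Fin d2 → Fin d3 → ℝ) : tip A B = tip B A := by
  simp only [tip, mul_comm]

theorem tip_self (A : Fin d1 → Fin d2 → Fin d3 → ℝ) :
    tip A A = ∑ j1, ∑ j2, ∑ j3, A j1 j2 j3 ^ 2 := by
  simp only [tip, sq]

theorem tip_sum_left {ι : Type*} [Fintype ι] (T : ι → Fin d1 → Fin d2 → Fin d3 → ℝ)
    (B : Fin d1 → Fin d2 → Fin d3 → ℝ) :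
    tip (fun j1 j2 j3 => ∑ x, T x j1 j2 j3) B = ∑ x, tip (T x) B := by
  simp only [tip, Finset.sum_mul]
  simp_rw [Finset.sum_comm (t := (univ : Finset ι))]

theorem tip_rankOne (A : Fin d1 → Fin d2 → Fin d3 → ℝ) (u : Fin d1 → ℝ) (v : Fin d2 → ℝ)
    (w : Fin d3 → ℝ) : tip A (fun j1 j2 j3 => u j1 * v j2 * w j3) = contract12 A u v ⬝ᵥ w := by
  simp only [tip, contract12, dotProduct, Finset.sum_mul]
  rw [Finset.sum_comm_cycle]
  exact sum_congr rfl fun _ _ => sum_congr rfl fun _ _ => sum_congr rfl fun _ _ => by ring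

theorem tip_le_sqrt_mul_sqrt (A B : Fin d1 → Fin d2 → Fin d3 → ℝ) :
    tip A B ≤ √(∑ j1, ∑ j2, ∑ j3, A j1 j2 j3 ^ 2) * √(∑ j1, ∑ j2, ∑ j3, B j1 j2 j3 ^ 2) := by
  simpa only [tip, Fintype.sum_prod_type] using
    Real.sum_mul_le_sqrt_mul_sqrt univ (fun x : Fin d1 × Fin d2 × Fin d3 => A x.1 x.2.1 x.2.2)
      (fun x => B x.1 x.2.1 x.2.2)

theorem sum_sq_rankOne (u : Fin d1 → ℝ) (v : Fin d2 → ℝ) (w : Fin d3 → ℝ) :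
    ∑ j1, ∑ j2, ∑ j3, (u j1 * v j2 * w j3) ^ 2
      = (∑ i, u i ^ 2) * ((∑ i, v i ^ 2) * (∑ i, w i ^ 2)) := by
  simp only [mul_pow, mul_assoc, ← Finset.mul_sum, ← Finset.sum_mul]

theorem bddAbove_tip_rankOne (B : Fin d1 → Fin d2 → Fin d3 → ℝ) :
    BddAbove {x | ∃ (u : Fin d1 → ℝ) (v : Fin d2 → ℝ) (w : Fin d3 → ℝ),
      (∑ i, u i ^ 2) ≤ 1 ∧ (∑ i, v i ^ 2) ≤ 1 ∧ (∑ i, w i ^ 2) ≤ 1 ∧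
      x = tip B (fun j1 j2 j3 => u j1 * v j2 * w j3)} := by
  refine ⟨√(∑ j1, ∑ j2, ∑ j3, B j1 j2 j3 ^ 2), ?_⟩
  rintro x ⟨u, v, w, hu, hv, hw, rfl⟩
  have hprod : (∑ i, u i ^ 2) * ((∑ i, v i ^ 2) * (∑ i, w i ^ 2)) ≤ 1 :=
    mul_le_one₀ hu (by positivity) (mul_le_one₀ hv (by positivity) hw)
  calc tip B _ ≤ √(∑ j1, ∑ j2, ∑ j3, B j1 j2 j3 ^ 2) * √1 := by
        grw [tip_le_sqrt_mul_sqrt, sum_sq_rankOne, hprod]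
    _ = _ := by rw [Real.sqrt_one, mul_one]

theorem tip_rankOne_le_specNorm (B : Fin d1 → Fin d2 → Fin d3 → ℝ) {u : Fin d1 → ℝ}
    {v : Fin d2 → ℝ} {w : Fin d3 → ℝ} (hu : ∑ i, u i ^ 2 ≤ 1) (hv : ∑ i, v i ^ 2 ≤ 1)
    (hw : ∑ i, w i ^ 2 ≤ 1) : tip B (fun j1 j2 j3 => u j1 * v j2 * w j3) ≤ specNorm B :=
  le_csSup (bddAbove_tip_rankOne B) ⟨u, v, w, hu, hv, hw, rfl⟩

theorem specNorm_nonneg (B : Fin d1 → Fin d2 → Fin d3 → ℝ) : 0 ≤ specNorm B :=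
  Real.sSup_nonneg' ⟨0, ⟨0, 0, 0, by simp, by simp, by simp, by simp [tip]⟩, le_rfl⟩

theorem sqrt_sum_sq_contract12_le_specNorm (B : Fin d1 → Fin d2 → Fin d3 → ℝ)
    {u : Fin d1 → ℝ} {v : Fin d2 → ℝ} (hu : ∑ i, u i ^ 2 ≤ 1) (hv : ∑ i, v i ^ 2 ≤ 1) :
    √(∑ j, contract12 B u v j ^ 2) ≤ specNorm B := by
  set c := contract12 B u v
  rcases (Real.sqrt_nonneg (∑ j, c j ^ 2)).eq_or_lt with hs | hs
  · exact hs ▸ specNorm_nonneg B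
  set s := √(∑ j, c j ^ 2)
  have hc : ∑ j, c j ^ 2 = s ^ 2 := (Real.sq_sqrt (by positivity)).symm
  have hw : ∑ j, (s⁻¹ * c j) ^ 2 ≤ 1 := by
    simp only [mul_pow, ← Finset.mul_sum, hc, inv_pow]
    rw [inv_mul_cancel₀ (by positivity)]
  calc s = c ⬝ᵥ (fun j => s⁻¹ * c j) := by
        simp only [dotProduct, mul_left_comm _ s⁻¹, ← Finset.mul_sum, ← sq, hc]
        field_simp
    _ = tip B (fun j1 j2 j3 => u j1 * v j2 * (s⁻¹ * c j3)) := (tip_rankOne B u v _).symm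
    _ ≤ specNorm B := tip_rankOne_le_specNorm B hu hv hw

theorem tip_sum_rankOne {ι : Type*} [Fintype ι] (p : ι → Fin d1 → ℝ) (q : ι → Fin d2 → ℝ)
    (g : ι → Fin d3 → ℝ) (B : Fin d1 → Fin d2 → Fin d3 → ℝ) :
    tip (fun j1 j2 j3 => ∑ x, p x j1 * q x j2 * g x j3) B
      = ∑ x, contract12 B (p x) (q x) ⬝ᵥ g x := by
  rw [tip_sum_left (fun x j1 j2 j3 => p x j1 * q x j2 * g x j3)]
  simp_rw [tip_comm _ B, tip_rankOne]

theorem tip_le_sqrt_card_mul_sqrt {ι : Type*} [Fintype ι] {A B : Fin d1 → Fin d2 → Fin d3 → ℝ}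
    {p : ι → Fin d1 → ℝ} {q : ι → Fin d2 → ℝ}
    (hp : ∀ x, ∑ i, p x i ^ 2 ≤ 1) (hq : ∀ x, ∑ i, q x i ^ 2 ≤ 1)
    (hA : A = fun j1 j2 j3 => ∑ x, p x j1 * q x j2 * contract12 A (p x) (q x) j3)
    (hB : specNorm B ≤ 1) :
    tip A B ≤ √(Fintype.card ι) * √(∑ j1, ∑ j2, ∑ j3, A j1 j2 j3 ^ 2) := by
  set g := fun x => contract12 A (p x) (q x)
  have hsq : ∑ j1, ∑ j2, ∑ j3, A j1 j2 j3 ^ 2 = ∑ x, ∑ j, g x j ^ 2 := by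
    rw [← tip_self]
    nth_rewrite 1 [hA]
    simp only [tip_sum_rankOne, dotProduct, sq, g]
  have hc : ∀ x, ∑ j, contract12 B (p x) (q x) j ^ 2 ≤ 1 := fun x =>
    Real.sqrt_le_one.mp ((sqrt_sum_sq_contract12_le_specNorm B (hp x) (hq x)).trans hB)
  calc tip A B = ∑ x, contract12 B (p x) (q x) ⬝ᵥ g x := by
        nth_rewrite 1 [hA]
        exact tip_sum_rankOne _ _ _ B
    _ ≤ ∑ x, √(∑ j, contract12 B (p x) (q x) j ^ 2) * √(∑ j, g x j ^ 2) :=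
        sum_le_sum fun x _ => Real.sum_mul_le_sqrt_mul_sqrt _ _ _
    _ ≤ ∑ x : ι, √1 * √(∑ j, g x j ^ 2) := by gcongr with x; exact hc x
    _ ≤ √(∑ x : ι, 1) * √(∑ x, ∑ j, g x j ^ 2) :=
        Real.sum_sqrt_mul_sqrt_le _ (fun _ => zero_le_one) (fun _ => by positivity)
    _ = √(Fintype.card ι) * √(∑ j1, ∑ j2, ∑ j3, A j1 j2 j3 ^ 2) := by
        simp [hsq]

theorem exists_rankOne_decomposition (A : Fin d1 → Fin d2 → Fin d3 → ℝ) :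
    ∃ (p : Fin (matr1 A).rank → Fin d1 → ℝ) (q : Fin (matr2 A).rank → Fin d2 → ℝ),
      (∀ a, ∑ i, p a i ^ 2 = 1) ∧ (∀ b, ∑ i, q b i ^ 2 = 1) ∧
      A = fun j1 j2 j3 => ∑ x : Fin (matr1 A).rank × Fin (matr2 A).rank,
        p x.1 j1 * q x.2 j2 * contract12 A (p x.1) (q x.2) j3 := by
  set V1 := Submodule.span ℝ (Set.range (matr1 A).col)
  set V2 := Submodule.span ℝ (Set.range (matr2 A).col)
  obtain ⟨m, p, hm, hp, hpV⟩ := V1.exists_orthonormal_expansion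
  obtain ⟨n, q, hn, hq, hqV⟩ := V2.exists_orthonormal_expansion
  rw [← rank_eq_finrank_span_cols] at hm hn
  subst hm hn
  refine ⟨p, q, fun a => by simpa [dotProduct, sq] using hp a,
    fun b => by simpa [dotProduct, sq] using hq b, ?_⟩
  have fiber1 : ∀ j2 j3, (fun j1 => A j1 j2 j3) ∈ V1 :=
    fun j2 j3 => Submodule.subset_span ⟨(j2, j3), rfl⟩
  have fiber2 : ∀ j1 j3, (fun j2 => A j1 j2 j3) ∈ V2 :=
    fun j1 j3 => Submodule.subset_span ⟨(j1, j3), rfl⟩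
  funext j1 j2 j3
  -- expand the mode-1 fiber in `p`; its coefficients, as functions of `j2`, are combinations of
  -- mode-2 fibers, so expand them in `q`
  have hslice : ∀ a, (fun j2 => p a ⬝ᵥ fun j1 => A j1 j2 j3) ∈ V2 := fun a => by
    have : (fun j2 => p a ⬝ᵥ fun j1 => A j1 j2 j3) = ∑ i, p a i • fun j2 => A i j2 j3 := by
      ext; simp [dotProduct]
    rw [this]
    exact Submodule.sum_smul_mem _ _ fun i _ => fiber2 i j3
  calc A j1 j2 j3 = ∑ a, (p a ⬝ᵥ fun j1 => A j1 j2 j3) * p a j1 := by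
        simpa using congrFun (hpV _ (fiber1 j2 j3)) j1
    _ = ∑ a, (∑ b, (q b ⬝ᵥ fun j2 => p a ⬝ᵥ fun j1 => A j1 j2 j3) * q b j2) * p a j1 := by
        refine sum_congr rfl fun a _ => ?_
        simpa using congrArg (· * p a j1) (congrFun (hqV _ (hslice a)) j2)
    _ = _ := by
        simp only [Fintype.sum_prod_type, Finset.sum_mul, contract12_apply]
        exact sum_congr rfl fun _ _ => sum_congr rfl fun _ _ => by ring

theorem tip_le_sqrt_rank_mul_rank (A : Fin d1 → Fin d2 → Fin d3 → ℝ)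
    {B : Fin d1 → Fin d2 → Fin d3 → ℝ} (hB : specNorm B ≤ 1) :
    tip A B ≤ √((matr1 A).rank * (matr2 A).rank) * √(∑ j1, ∑ j2, ∑ j3, A j1 j2 j3 ^ 2) := by
  obtain ⟨p, q, hp, hq, hA⟩ := exists_rankOne_decomposition A
  simpa using tip_le_sqrt_card_mul_sqrt (p := fun x : _ × _ => p x.1) (q := fun x => q x.2)
    (fun x => (hp x.1).le) (fun x => (hq x.2).le) hA hB

theorem nucNorm_le_of_forall_tip_le {A : Fin d1 → Fin d2 → Fin d3 → ℝ} {c : ℝ} (hc : 0 ≤ c)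
    (h : ∀ B, specNorm B ≤ 1 → tip A B ≤ c) : nucNorm A ≤ c :=
  Real.sSup_le (fun _ ⟨B, hB, hx⟩ => hx ▸ h B hB) hc

theorem nucNorm_nonneg (A : Fin d1 → Fin d2 → Fin d3 → ℝ) : 0 ≤ nucNorm A := by
  refine Real.sSup_nonneg' ⟨0, ⟨0, ?_, by simp [tip]⟩, le_rfl⟩
  exact Real.sSup_le (fun _ ⟨u, v, w, _, _, _, hx⟩ => by simp [hx, tip]) zero_le_one

end

theorem stmt8_general {d1 d2 d3 : ℕ} (r : ℕ) (A : Fin d1 → Fin d2 → Fin d3 → ℝ)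
    (h1 : (matr1 A).rank ≤ r) (h2 : (matr2 A).rank ≤ r) :
    nucNorm A ^ 2 ≤ (r : ℝ) ^ 2 * (∑ j1, ∑ j2, ∑ j3, (A j1 j2 j3) ^ 2) ∧
      nucNorm A ≤ (r : ℝ) * Real.sqrt (∑ j1, ∑ j2, ∑ j3, (A j1 j2 j3) ^ 2) := by
  have hrank : √((matr1 A).rank * (matr2 A).rank) ≤ r := by
    rw [Real.sqrt_le_left (by positivity)]
    exact_mod_cast sq r ▸ Nat.mul_le_mul h1 h2
  have hle : nucNorm A ≤ r * √(∑ j1, ∑ j2, ∑ j3, A j1 j2 j3 ^ 2) :=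
    nucNorm_le_of_forall_tip_le (by positivity) fun B hB =>
      (tip_le_sqrt_rank_mul_rank A hB).trans (by gcongr)
  refine ⟨?_, hle⟩
  calc nucNorm A ^ 2 ≤ (r * √(∑ j1, ∑ j2, ∑ j3, A j1 j2 j3 ^ 2)) ^ 2 := by
        gcongr; exact nucNorm_nonneg A
    _ = r ^ 2 * ∑ j1, ∑ j2, ∑ j3, A j1 j2 j3 ^ 2 := by
        rw [mul_pow, Real.sq_sqrt (by positivity)]

/-- if all Tucker ranks of `A` are at most `r`, then the tensor nuclear norm
satisfies `‖A‖_*² ≤ r² ‖A‖_F²`, i.e. `‖A‖_* ≤ r ‖A‖_F`. -/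
theorem stmt8 {d1 d2 d3 : ℕ} (r : ℕ) (A : Fin d1 → Fin d2 → Fin d3 → ℝ)
    (h1 : (matr1 A).rank ≤ r) (h2 : (matr2 A).rank ≤ r) (h3 : (matr3 A).rank ≤ r) :
    nucNorm A ^ 2 ≤ (r : ℝ) ^ 2 * (∑ j1, ∑ j2, ∑ j3, (A j1 j2 j3) ^ 2) ∧
      nucNorm A ≤ (r : ℝ) * Real.sqrt (∑ j1, ∑ j2, ∑ j3, (A j1 j2 j3) ^ 2) :=
  stmt8_general r A h1 h2
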